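/- arXiv:2307.02932 — 2 statements merged into one kernel-verified Lean document; each statement's English description precedes it below -/
import Mathlib

section
/- Fix a measurable regressor f : 𝒳 → ℝ with E[(f(X)−Y)²] < ∞, and let r_f(x) = 1{R(f,x) ≤ c} be the rejector induced by f. Then r_f minimizes the RwR loss of f over all measurable rejectors: L_RwR(f, r_f) ≤ L_RwR(f, r) for every measurable r : 𝒳 → {0,1}. -/
/-!
Since `r(X)` is `σ(X)`-measurable, pulling it out of the conditional expectation replaces the
squared error by the conditional risk: `L_RwR(f, r) = E[r(X) R(f, X) + (1 - r(X)) c]`.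
For `r(x) ∈ [0, 1]` the integrand is a convex combination of `R(f, X)` and `c`, hence at least
their minimum, which is exactly the integrand for `r = r_f`.
-/

open MeasureTheory Filter

noncomputable section

/-- The regression-with-rejection (RwR) loss
`L_RwR(f,r) = E[ r(X)·(f(X)−Y)² + (1−r(X))·c ]`. -/
def LRwR {Ω : Type*} [MeasurableSpace Ω] {d : ℕ} (μ : Measure Ω)
    (X : Ω → EuclideanSpace ℝ (Fin d)) (Y : Ω → ℝ) (c : ℝ)
    (f r : EuclideanSpace ℝ (Fin d) → ℝ) : ℝ :=
  ∫ ω, r (X ω) * (f (X ω) - Y ω) ^ 2 + (1 - r (X ω)) * c ∂μ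

/-- `g : 𝒳 → ℝ` is a measurable version of the conditional expectation
`E[Z | X]`, i.e. `g(X) = E[Z | σ(X)]` a.s. -/
def IsCondMean {Ω : Type*} [MeasurableSpace Ω] {d : ℕ} (μ : Measure Ω)
    (X : Ω → EuclideanSpace ℝ (Fin d)) (Z : Ω → ℝ)
    (g : EuclideanSpace ℝ (Fin d) → ℝ) : Prop :=
  (fun ω => g (X ω)) =ᵐ[μ] μ[Z | MeasurableSpace.comap X inferInstance]

theorem integral_mul_condExp_of_stronglyMeasurable {Ω : Type*} {m m₀ : MeasurableSpace Ω}
    {μ : Measure Ω} (hm : m ≤ m₀) [SigmaFinite (μ.trim hm)] {φ Z : Ω → ℝ}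
    (hφ : StronglyMeasurable[m] φ) (hφZ : Integrable (φ * Z) μ) (hZ : Integrable Z μ) :
    ∫ ω, φ ω * μ[Z | m] ω ∂μ = ∫ ω, φ ω * Z ω ∂μ :=
  calc ∫ ω, φ ω * μ[Z | m] ω ∂μ = ∫ ω, μ[φ * Z | m] ω ∂μ :=
        integral_congr_ae (condExp_mul_of_stronglyMeasurable_left hφ hφZ hZ).symm
    _ = ∫ ω, φ ω * Z ω ∂μ := integral_condExp hm

section Rejection

variable {Ω : Type*} [MeasurableSpace Ω] {μ : Measure Ω} {ρ : Ω → ℝ}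

lemma MeasureTheory.Integrable.mul_of_mem_unitInterval {g : Ω → ℝ} (hg : Integrable g μ)
    (hρ : AEStronglyMeasurable ρ μ) (hρ01 : ∀ ω, ρ ω ∈ Set.Icc (0 : ℝ) 1) :
    Integrable (fun ω => ρ ω * g ω) μ :=
  hg.bdd_mul hρ <| ae_of_all _ fun ω => by
    rw [Real.norm_of_nonneg (hρ01 ω).1]; exact (hρ01 ω).2

lemma integrable_one_sub_mul_const [IsFiniteMeasure μ] (hρ : AEStronglyMeasurable ρ μ)
    (hρ01 : ∀ ω, ρ ω ∈ Set.Icc (0 : ℝ) 1) (c : ℝ) :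
    Integrable (fun ω => (1 - ρ ω) * c) μ :=
  (integrable_const c).mul_of_mem_unitInterval (aestronglyMeasurable_const.sub hρ)
    fun ω => ⟨by linarith [(hρ01 ω).2], by linarith [(hρ01 ω).1]⟩

lemma integrable_mul_add_one_sub_mul_const [IsFiniteMeasure μ] {g : Ω → ℝ} (hg : Integrable g μ)
    (hρ : AEStronglyMeasurable ρ μ) (hρ01 : ∀ ω, ρ ω ∈ Set.Icc (0 : ℝ) 1) (c : ℝ) :
    Integrable (fun ω => ρ ω * g ω + (1 - ρ ω) * c) μ :=
  (hg.mul_of_mem_unitInterval hρ hρ01).add (integrable_one_sub_mul_const hρ hρ01 c)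

lemma LRwR_eq_integral_condRisk [IsFiniteMeasure μ] {d : ℕ}
    {X : Ω → EuclideanSpace ℝ (Fin d)} {Y : Ω → ℝ} {c : ℝ}
    {f Rf r : EuclideanSpace ℝ (Fin d) → ℝ} (hX : Measurable X)
    (hf2 : Integrable (fun ω => (f (X ω) - Y ω) ^ 2) μ)
    (hRf : IsCondMean μ X (fun ω => (f (X ω) - Y ω) ^ 2) Rf)
    (hr : Measurable r) (hr01 : ∀ x, r x ∈ Set.Icc (0 : ℝ) 1) :
    LRwR μ X Y c f r = ∫ ω, r (X ω) * Rf (X ω) + (1 - r (X ω)) * c ∂μ := by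
  have hrX_m : StronglyMeasurable[MeasurableSpace.comap X inferInstance] (fun ω => r (X ω)) :=
    (hr.comp (comap_measurable X)).stronglyMeasurable
  have hrX : AEStronglyMeasurable (fun ω => r (X ω)) μ := (hr.comp hX).aestronglyMeasurable
  have hRfX : Integrable (fun ω => Rf (X ω)) μ := integrable_condExp.congr hRf.symm
  have hrZ := hf2.mul_of_mem_unitInterval hrX fun ω => hr01 (X ω)
  have hcost := integrable_one_sub_mul_const hrX (fun ω => hr01 (X ω)) c
  have hpull : ∫ ω, r (X ω) * Rf (X ω) ∂μ = ∫ ω, r (X ω) * (f (X ω) - Y ω) ^ 2 ∂μ := by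
    rw [← integral_mul_condExp_of_stronglyMeasurable hX.comap_le hrX_m hrZ hf2]
    exact integral_congr_ae (hRf.mono fun ω h => congrArg (r (X ω) * ·) h)
  rw [LRwR, integral_add hrZ hcost,
    integral_add (hRfX.mul_of_mem_unitInterval hrX fun ω => hr01 (X ω)) hcost, hpull]

lemma ite_mul_add_one_sub_ite_mul_le {a c ρ : ℝ} (hρ : ρ ∈ Set.Icc (0 : ℝ) 1) :
    (if a ≤ c then 1 else 0) * a + (1 - if a ≤ c then 1 else 0) * c ≤ ρ * a + (1 - ρ) * c := by
  obtain ⟨hρ0, hρ1⟩ := hρ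
  split_ifs with h <;> nlinarith

end Rejection

theorem stmt4_general {Ω : Type*} [MeasurableSpace Ω] {d : ℕ}
    (μ : Measure Ω) [IsProbabilityMeasure μ]
    (X : Ω → EuclideanSpace ℝ (Fin d)) (Y : Ω → ℝ)
    (hX : Measurable X)
    (c : ℝ)
    (f : EuclideanSpace ℝ (Fin d) → ℝ)
    (hf2 : Integrable (fun ω => (f (X ω) - Y ω) ^ 2) μ)
    (Rf : EuclideanSpace ℝ (Fin d) → ℝ) (hRf_m : Measurable Rf)
    (hRf : IsCondMean μ X (fun ω => (f (X ω) - Y ω) ^ 2) Rf)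
    (r : EuclideanSpace ℝ (Fin d) → ℝ) (hr_m : Measurable r)
    (hr01 : ∀ x, r x = 0 ∨ r x = 1) :
    LRwR μ X Y c f (fun x => if Rf x ≤ c then 1 else 0) ≤ LRwR μ X Y c f r := by
  set rf : EuclideanSpace ℝ (Fin d) → ℝ := fun x => if Rf x ≤ c then 1 else 0
  have hrf_m : Measurable rf :=
    Measurable.ite (measurableSet_le hRf_m measurable_const) measurable_const measurable_const
  have hrf01 : ∀ x, rf x ∈ Set.Icc (0 : ℝ) 1 := fun x => by
    by_cases h : Rf x ≤ c <;> simp [rf, h]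
  have hr01' : ∀ x, r x ∈ Set.Icc (0 : ℝ) 1 := fun x => by
    rcases hr01 x with h | h <;> simp [h]
  have hRfX : Integrable (fun ω => Rf (X ω)) μ := integrable_condExp.congr hRf.symm
  rw [LRwR_eq_integral_condRisk hX hf2 hRf hrf_m hrf01,
    LRwR_eq_integral_condRisk hX hf2 hRf hr_m hr01']
  refine integral_mono ?_ ?_ fun ω => ite_mul_add_one_sub_ite_mul_le (hr01' (X ω))
  · exact integrable_mul_add_one_sub_mul_const hRfX (hrf_m.comp hX).aestronglyMeasurable
      (fun ω => hrf01 (X ω)) c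
  · exact integrable_mul_add_one_sub_mul_const hRfX (hr_m.comp hX).aestronglyMeasurable
      (fun ω => hr01' (X ω)) c

/-- the induced rejector `r_f(x) = 1{R(f,x) ≤ c}` minimizes the
RwR loss of `f` over all measurable rejectors. -/
theorem stmt4 {Ω : Type*} [MeasurableSpace Ω] {d : ℕ}
    (μ : Measure Ω) [IsProbabilityMeasure μ]
    (X : Ω → EuclideanSpace ℝ (Fin d)) (Y : Ω → ℝ)
    (hX : Measurable X) (hY : Measurable Y)
    (hY2 : Integrable (fun ω => (Y ω) ^ 2) μ)
    (c : ℝ) (hc : 0 < c)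
    (f : EuclideanSpace ℝ (Fin d) → ℝ) (hf : Measurable f)
    (hf2 : Integrable (fun ω => (f (X ω) - Y ω) ^ 2) μ)
    (Rf : EuclideanSpace ℝ (Fin d) → ℝ) (hRf_m : Measurable Rf)
    (hRf : IsCondMean μ X (fun ω => (f (X ω) - Y ω) ^ 2) Rf)
    (r : EuclideanSpace ℝ (Fin d) → ℝ) (hr_m : Measurable r)
    (hr01 : ∀ x, r x = 0 ∨ r x = 1) :
    LRwR μ X Y c f (fun x => if Rf x ≤ c then 1 else 0) ≤ LRwR μ X Y c f r :=
  stmt4_general μ X Y hX c f hf2 Rf hRf_m hRf r hr_m hr01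
end
end

section
/- Let f be a measurable regressor with E[(f(X)−Y)²] < ∞ and suppose R(f,X) ≤ B almost surely for some constant B ≥ c. Then for every measurable rejector r : 𝒳 → {0,1}, 0 ≤ L_RwR(f, r) − L_RwR(f, r_f) ≤ E[ (R(f,X) + c) · 1{r(X) ≠ r_f(X)} ] ≤ (B + c) · P(r(X) ≠ r_f(X)), where r_f is the rejector induced by f. -/
/-!
Conditioning on `X` turns the loss into `E[r(X) R(f,X) + (1 - r(X)) c]`, so the excess loss of `r`
over `r_f` is `E[(r(X) - r_f(X)) (R(f,X) - c)]`. Pointwise, `r_f` selects the smaller of `R(f,X)`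
and `c`, so this integrand is nonnegative, vanishes where `r` and `r_f` agree, and elsewhere equals
`|R(f,X) - c| ≤ R(f,X) + c ≤ B + c`.
-/

open MeasureTheory Filter

noncomputable section

theorem integral_mul_condExp_of_bound {Ω : Type*} {m m₀ : MeasurableSpace Ω} {μ : Measure Ω}
    [IsFiniteMeasure μ] (hm : m ≤ m₀) {w Z : Ω → ℝ} (hw : StronglyMeasurable[m] w)
    (hZ : Integrable Z μ) {C : ℝ} (hwC : ∀ᵐ ω ∂μ, ‖w ω‖ ≤ C) :
    ∫ ω, w ω * μ[Z | m] ω ∂μ = ∫ ω, w ω * Z ω ∂μ := by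
  rw [← integral_condExp hm (f := fun ω => w ω * Z ω)]
  exact integral_congr_ae (condExp_stronglyMeasurable_mul_of_bound hm hw hZ C hwC).symm

section Regression

variable {Ω : Type*} [MeasurableSpace Ω] {d : ℕ} {μ : Measure Ω}
  {X : Ω → EuclideanSpace ℝ (Fin d)}

theorem integrable_comp_mul_of_bound (hX : Measurable X) {w : EuclideanSpace ℝ (Fin d) → ℝ}
    (hw : Measurable w) {C : ℝ} (hwC : ∀ x, ‖w x‖ ≤ C) {g : Ω → ℝ} (hg : Integrable g μ) :
    Integrable (fun ω => w (X ω) * g ω) μ :=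
  hg.bdd_mul (hw.comp hX).aestronglyMeasurable (ae_of_all _ fun ω => hwC (X ω))

theorem IsCondMean.integrable_comp {Z : Ω → ℝ} {g : EuclideanSpace ℝ (Fin d) → ℝ}
    (h : IsCondMean μ X Z g) : Integrable (fun ω => g (X ω)) μ :=
  integrable_condExp.congr h.symm

theorem IsCondMean.ae_nonneg {Z : Ω → ℝ} {g : EuclideanSpace ℝ (Fin d) → ℝ}
    (h : IsCondMean μ X Z g) (hZ : 0 ≤ᵐ[μ] Z) : ∀ᵐ ω ∂μ, 0 ≤ g (X ω) := by
  filter_upwards [condExp_nonneg hZ, h] with ω hω hgω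
  rw [hgω]
  exact hω

theorem IsCondMean.integral_comp_mul [IsFiniteMeasure μ] {Z : Ω → ℝ}
    {g : EuclideanSpace ℝ (Fin d) → ℝ} (h : IsCondMean μ X Z g) (hX : Measurable X)
    (hZ : Integrable Z μ) {w : EuclideanSpace ℝ (Fin d) → ℝ} (hw : Measurable w) {C : ℝ}
    (hwC : ∀ x, ‖w x‖ ≤ C) :
    ∫ ω, w (X ω) * g (X ω) ∂μ = ∫ ω, w (X ω) * Z ω ∂μ := by
  have hwX : StronglyMeasurable[MeasurableSpace.comap X inferInstance] (fun ω => w (X ω)) :=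
    (hw.comp (comap_measurable X)).stronglyMeasurable
  rw [← integral_mul_condExp_of_bound hX.comap_le hwX hZ (ae_of_all _ fun ω => hwC (X ω))]
  exact integral_congr_ae (h.mono fun ω hω => congrArg (w (X ω) * ·) hω)

theorem LRwR_eq_integral_condMean [IsFiniteMeasure μ] (hX : Measurable X) {Y : Ω → ℝ} {c : ℝ}
    {f Rf : EuclideanSpace ℝ (Fin d) → ℝ} (hf2 : Integrable (fun ω => (f (X ω) - Y ω) ^ 2) μ)
    (hRf : IsCondMean μ X (fun ω => (f (X ω) - Y ω) ^ 2) Rf)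
    {w : EuclideanSpace ℝ (Fin d) → ℝ} (hw : Measurable w) {C : ℝ} (hwC : ∀ x, ‖w x‖ ≤ C) :
    LRwR μ X Y c f w = ∫ ω, w (X ω) * Rf (X ω) + (1 - w (X ω)) * c ∂μ := by
  have h1w : ∀ x, ‖1 - w x‖ ≤ 1 + C := fun x =>
    (norm_sub_le _ _).trans (by rw [norm_one]; linarith [hwC x])
  have hcost : Integrable (fun ω => (1 - w (X ω)) * c) μ :=
    integrable_comp_mul_of_bound hX (w := fun x => 1 - w x) (measurable_const.sub hw) h1w
      (integrable_const c)
  rw [LRwR, integral_add (integrable_comp_mul_of_bound hX hw hwC hf2) hcost,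
    integral_add (integrable_comp_mul_of_bound hX hw hwC hRf.integrable_comp) hcost,
    hRf.integral_comp_mul hX hf2 hw hwC]

theorem LRwR_sub_LRwR_eq_integral [IsFiniteMeasure μ] (hX : Measurable X) {Y : Ω → ℝ} {c : ℝ}
    {f Rf : EuclideanSpace ℝ (Fin d) → ℝ} (hf2 : Integrable (fun ω => (f (X ω) - Y ω) ^ 2) μ)
    (hRf : IsCondMean μ X (fun ω => (f (X ω) - Y ω) ^ 2) Rf)
    {r r' : EuclideanSpace ℝ (Fin d) → ℝ} (hr : Measurable r) (hr' : Measurable r') {C : ℝ}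
    (hrC : ∀ x, ‖r x‖ ≤ C) (hr'C : ∀ x, ‖r' x‖ ≤ C) :
    LRwR μ X Y c f r - LRwR μ X Y c f r'
      = ∫ ω, (r (X ω) - r' (X ω)) * (Rf (X ω) - c) ∂μ := by
  have hRfc : Integrable (fun ω => Rf (X ω) - c) μ := hRf.integrable_comp.sub (integrable_const c)
  have hrRf := integrable_comp_mul_of_bound hX hr hrC hRfc
  have hr'Rf := integrable_comp_mul_of_bound hX hr' hr'C hRfc
  calc LRwR μ X Y c f r - LRwR μ X Y c f r'
      = (∫ ω, r (X ω) * (Rf (X ω) - c) ∂μ + ∫ _ω, c ∂μ)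
          - (∫ ω, r' (X ω) * (Rf (X ω) - c) ∂μ + ∫ _ω, c ∂μ) := by
        rw [LRwR_eq_integral_condMean hX hf2 hRf hr hrC,
          LRwR_eq_integral_condMean hX hf2 hRf hr' hr'C,
          ← integral_add hrRf (integrable_const c), ← integral_add hr'Rf (integrable_const c)]
        congr 1 <;> exact integral_congr_ae (ae_of_all _ fun ω => by ring)
    _ = ∫ ω, (r (X ω) - r' (X ω)) * (Rf (X ω) - c) ∂μ := by
        rw [add_sub_add_right_eq_sub, ← integral_sub hrRf hr'Rf]
        exact integral_congr_ae (ae_of_all _ fun ω => by ring)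

end Regression

section Disagreement

variable {Ω : Type*} {p : Ω → Prop} [DecidablePred p] {g : Ω → ℝ}

theorem mul_ite_zero_one_eq_indicator :
    (fun ω => g ω * if p ω then (0 : ℝ) else 1) = {ω | ¬ p ω}.indicator g := by
  ext ω
  by_cases h : p ω <;> simp [h]

variable [MeasurableSpace Ω] {μ : Measure Ω}

theorem MeasureTheory.Integrable.mul_ite_zero_one (hg : Integrable g μ)
    (hp : MeasurableSet {ω | ¬ p ω}) :
    Integrable (fun ω => g ω * if p ω then (0 : ℝ) else 1) μ := by
  rw [mul_ite_zero_one_eq_indicator]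
  exact hg.indicator hp

theorem integral_mul_ite_zero_one_le [IsFiniteMeasure μ] (hg : Integrable g μ)
    (hp : MeasurableSet {ω | ¬ p ω}) {B : ℝ} (hgB : ∀ᵐ ω ∂μ, g ω ≤ B) :
    ∫ ω, g ω * (if p ω then (0 : ℝ) else 1) ∂μ ≤ B * μ.real {ω | ¬ p ω} := by
  rw [mul_ite_zero_one_eq_indicator, integral_indicator hp, mul_comm, ← smul_eq_mul,
    ← setIntegral_const]
  exact setIntegral_mono_ae hg.integrableOn (integrable_const B).integrableOn hgB

end Disagreement

section Pointwise

variable {a R c : ℝ}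

theorem sub_ite_le_mul_sub_nonneg (ha : a = 0 ∨ a = 1) :
    0 ≤ (a - if R ≤ c then 1 else 0) * (R - c) := by
  rcases ha with rfl | rfl <;> split_ifs <;> nlinarith

theorem sub_ite_le_mul_sub_le (ha : a = 0 ∨ a = 1) (hR : 0 ≤ R) (hc : 0 ≤ c) :
    (a - if R ≤ c then 1 else 0) * (R - c)
      ≤ (R + c) * if a = (if R ≤ c then 1 else 0) then 0 else 1 := by
  rcases ha with rfl | rfl <;> split_ifs <;> norm_num at * <;> linarith

end Pointwise

theorem stmt18_general {Ω : Type*} [MeasurableSpace Ω] {d : ℕ}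
    (μ : Measure Ω) [IsProbabilityMeasure μ]
    (X : Ω → EuclideanSpace ℝ (Fin d)) (Y : Ω → ℝ)
    (hX : Measurable X)
    (c : ℝ) (hc : 0 < c)
    (f : EuclideanSpace ℝ (Fin d) → ℝ)
    (hf2 : Integrable (fun ω => (f (X ω) - Y ω) ^ 2) μ)
    (Rf : EuclideanSpace ℝ (Fin d) → ℝ) (hRf_m : Measurable Rf)
    (hRf : IsCondMean μ X (fun ω => (f (X ω) - Y ω) ^ 2) Rf)
    (B : ℝ)
    (hRB : ∀ᵐ ω ∂μ, Rf (X ω) ≤ B)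
    (r : EuclideanSpace ℝ (Fin d) → ℝ) (hr_m : Measurable r)
    (hr01 : ∀ x, r x = 0 ∨ r x = 1) :
    0 ≤ LRwR μ X Y c f r - LRwR μ X Y c f (fun x => if Rf x ≤ c then 1 else 0) ∧
    LRwR μ X Y c f r - LRwR μ X Y c f (fun x => if Rf x ≤ c then 1 else 0)
      ≤ ∫ ω, (Rf (X ω) + c) *
          (if r (X ω) = (if Rf (X ω) ≤ c then (1 : ℝ) else 0) then 0 else 1) ∂μ ∧
    ∫ ω, (Rf (X ω) + c) *
        (if r (X ω) = (if Rf (X ω) ≤ c then (1 : ℝ) else 0) then 0 else 1) ∂μ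
      ≤ (B + c) *
        (μ {ω | r (X ω) ≠ (if Rf (X ω) ≤ c then (1 : ℝ) else 0)}).toReal := by
  set rf : EuclideanSpace ℝ (Fin d) → ℝ := fun x => if Rf x ≤ c then 1 else 0
  have hrf_m : Measurable rf :=
    Measurable.ite (measurableSet_le hRf_m measurable_const) measurable_const measurable_const
  have hr_le : ∀ x, ‖r x‖ ≤ 1 := fun x => by rcases hr01 x with h | h <;> simp [h]
  have hrf_le : ∀ x, ‖rf x‖ ≤ 1 := fun x => by dsimp only [rf]; split_ifs <;> simp
  have hdisagree : MeasurableSet {ω | r (X ω) ≠ rf (X ω)} :=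
    (measurableSet_eq_fun (hr_m.comp hX) (hrf_m.comp hX)).compl
  have hRfc : Integrable (fun ω => Rf (X ω) + c) μ := hRf.integrable_comp.add (integrable_const c)
  have hRf_nonneg := hRf.ae_nonneg (ae_of_all _ fun ω => sq_nonneg (f (X ω) - Y ω))
  rw [LRwR_sub_LRwR_eq_integral hX hf2 hRf hr_m hrf_m hr_le hrf_le]
  refine ⟨integral_nonneg fun ω => sub_ite_le_mul_sub_nonneg (hr01 (X ω)), ?_, ?_⟩
  · exact integral_mono_of_nonneg (ae_of_all _ fun ω => sub_ite_le_mul_sub_nonneg (hr01 (X ω)))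
      (hRfc.mul_ite_zero_one hdisagree)
      (hRf_nonneg.mono fun ω hω => sub_ite_le_mul_sub_le (hr01 (X ω)) hω hc.le)
  · exact integral_mul_ite_zero_one_le hRfc hdisagree (hRB.mono fun ω hω => by linarith)

/-- the suboptimality of any rejector `r` relative to the induced
rejector `r_f` is controlled by the disagreement event:
`0 ≤ L_RwR(f,r) − L_RwR(f,r_f) ≤ E[(R(f,X)+c)·1{r(X) ≠ r_f(X)}]
   ≤ (B+c)·P(r(X) ≠ r_f(X))`. -/
theorem stmt18 {Ω : Type*} [MeasurableSpace Ω] {d : ℕ}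
    (μ : Measure Ω) [IsProbabilityMeasure μ]
    (X : Ω → EuclideanSpace ℝ (Fin d)) (Y : Ω → ℝ)
    (hX : Measurable X) (hY : Measurable Y)
    (hY2 : Integrable (fun ω => (Y ω) ^ 2) μ)
    (c : ℝ) (hc : 0 < c)
    (f : EuclideanSpace ℝ (Fin d) → ℝ) (hf : Measurable f)
    (hf2 : Integrable (fun ω => (f (X ω) - Y ω) ^ 2) μ)
    (Rf : EuclideanSpace ℝ (Fin d) → ℝ) (hRf_m : Measurable Rf)
    (hRf : IsCondMean μ X (fun ω => (f (X ω) - Y ω) ^ 2) Rf)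
    (B : ℝ) (hBc : c ≤ B)
    (hRB : ∀ᵐ ω ∂μ, Rf (X ω) ≤ B)
    (r : EuclideanSpace ℝ (Fin d) → ℝ) (hr_m : Measurable r)
    (hr01 : ∀ x, r x = 0 ∨ r x = 1) :
    0 ≤ LRwR μ X Y c f r - LRwR μ X Y c f (fun x => if Rf x ≤ c then 1 else 0) ∧
    LRwR μ X Y c f r - LRwR μ X Y c f (fun x => if Rf x ≤ c then 1 else 0)
      ≤ ∫ ω, (Rf (X ω) + c) *
          (if r (X ω) = (if Rf (X ω) ≤ c then (1 : ℝ) else 0) then 0 else 1) ∂μ ∧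
    ∫ ω, (Rf (X ω) + c) *
        (if r (X ω) = (if Rf (X ω) ≤ c then (1 : ℝ) else 0) then 0 else 1) ∂μ
      ≤ (B + c) *
        (μ {ω | r (X ω) ≠ (if Rf (X ω) ≤ c then (1 : ℝ) else 0)}).toReal :=
  stmt18_general μ X Y hX c hc f hf2 Rf hRf_m hRf B hRB r hr_m hr01
end
end
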